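/- For every Υ ∈ (0,1) there exists a constant C > 0 (depending only on Υ) such that for all positive integers k and N with k ≥ (1 − Υ/10)·N, and all x ∈ [−2+Υ, 2−Υ]: |ψ_k(x·√N)| ≤ C·k^{−1/4}. -/

import Mathlib

/-!
On `x ≥ 0` the Hermite function `u = ψ_k` solves `u'' = -ω u` with the decreasing frequency
`ω(x) = k + 1/2 - x²/4`. Hence the energy `ω u² + u'²` decreases, while `u² + u'²/ω` increases
where `ω > 0`. Averaging the latter over a window `[p, p + L]` on which `ω ≥ A`, and bounding
`∫ u'²` by an integration by parts whose boundary term is controlled by the energy, gives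
`u(p)² L ≲ (1 + k/A) ∫ u² = 1 + k/A`. In the bulk one can take `L ≍ √k` and `A ≍ k`, so that
`ψ_k(p)² ≲ k^{-1/2}` once `k` is large; each of the finitely many remaining `ψ_k` is bounded.
-/

open MeasureTheory Real Filter Set

noncomputable section

/-- The `k`-th Hermite function (probabilist's normalization). -/
def hermiteFun (k : ℕ) (x : ℝ) : ℝ :=
  (Polynomial.aeval x (Polynomial.hermite k)) * Real.exp (-x ^ 2 / 4) /
    Real.sqrt (Real.sqrt (2 * Real.pi) * (Nat.factorial k))

open Polynomial Topology Nat

namespace Polynomial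

theorem derivative_hermite_succ (n : ℕ) :
    derivative (hermite (n + 1)) = (n + 1 : ℤ[X]) * hermite n := by
  induction n with
  | zero => simp
  | succ m ih =>
    rw [hermite_succ (m + 1), derivative_sub, derivative_mul, derivative_X, ih, derivative_mul,
      hermite_succ m]
    push_cast
    simp only [derivative_add, derivative_natCast, derivative_one]
    ring

theorem hermite_succ_succ (n : ℕ) :
    hermite (n + 2) = X * hermite (n + 1) - (n + 1 : ℤ[X]) * hermite n := by
  rw [hermite_succ (n + 1), derivative_hermite_succ]

theorem derivative_derivative_hermite (n : ℕ) :
    derivative (derivative (hermite n))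
      = X * derivative (hermite n) - (n : ℤ[X]) * hermite n := by
  cases n with
  | zero => simp
  | succ m =>
    rw [derivative_hermite_succ, derivative_mul, hermite_succ m]
    push_cast
    simp only [derivative_add, derivative_natCast, derivative_one]
    ring

theorem aeval_neg_hermite {A : Type*} [CommRing A] (n : ℕ) (x : A) :
    aeval (-x) (hermite n) = (-1) ^ n * aeval x (hermite n) := by
  induction n using Nat.strong_induction_on with
  | _ n ih =>
    match n with
    | 0 => simp
    | 1 => simp
    | m + 2 =>
      simp only [hermite_succ_succ, map_sub, map_mul, aeval_X, map_add, map_natCast, map_one,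
        ih (m + 1) (by omega), ih m (by omega)]
      ring

end Polynomial

theorem tendsto_aeval_mul_exp_neg_mul_sq_cocompact {R : Type*} [CommSemiring R] [Algebra R ℝ]
    (q : R[X]) {b : ℝ} (hb : 0 < b) :
    Tendsto (fun x : ℝ => aeval x q * exp (-b * x ^ 2)) (cocompact ℝ) (𝓝 0) := by
  have hmono (i : ℕ) :
      Tendsto (fun x : ℝ => x ^ i * exp (-b * x ^ 2)) (cocompact ℝ) (𝓝 0) := by
    refine squeeze_zero_norm (fun x => le_of_eq ?_)
      (tendsto_rpow_abs_mul_exp_neg_mul_sq_cocompact hb i)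
    rw [norm_mul, norm_pow, Real.norm_eq_abs, Real.norm_of_nonneg (exp_nonneg _), rpow_natCast]
  simp_rw [aeval_eq_sum_range, Finset.sum_mul]
  rw [← Finset.sum_const_zero (s := Finset.range (q.natDegree + 1))]
  refine tendsto_finsetSum _ fun i _ => ?_
  simpa [Algebra.smul_def, mul_assoc] using (hmono i).const_mul (algebraMap R ℝ (q.coeff i))

theorem exists_abs_aeval_mul_exp_neg_mul_sq_le {R : Type*} [CommSemiring R] [Algebra R ℝ]
    (q : R[X]) {b : ℝ} (hb : 0 < b) :
    ∃ C, ∀ x : ℝ, |aeval x q * exp (-b * x ^ 2)| ≤ C := by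
  let f : ZeroAtInftyContinuousMap ℝ ℝ :=
    ⟨⟨_, by fun_prop⟩, tendsto_aeval_mul_exp_neg_mul_sq_cocompact q hb⟩
  obtain ⟨C, hC⟩ := isBounded_iff_forall_norm_le.1 f.isBounded_range
  exact ⟨C, fun x => hC _ (mem_range_self x)⟩

theorem integrable_aeval_mul_exp_neg_mul_sq {R : Type*} [CommSemiring R] [Algebra R ℝ]
    (q : R[X]) {b : ℝ} (hb : 0 < b) :
    Integrable (fun x : ℝ => aeval x q * exp (-b * x ^ 2)) := by
  obtain ⟨C, hC⟩ := exists_abs_aeval_mul_exp_neg_mul_sq_le q (half_pos hb)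
  refine ((integrable_exp_neg_mul_sq (half_pos hb)).bdd_mul (c := C) (by fun_prop)
    (Eventually.of_forall hC)).congr (Eventually.of_forall fun x => ?_)
  simp only
  rw [mul_assoc, ← exp_add]
  ring_nf

theorem hasDerivAt_exp_neg_sq_div (c x : ℝ) :
    HasDerivAt (fun y : ℝ => exp (-y ^ 2 / c)) (-(2 * x / c) * exp (-x ^ 2 / c)) x :=
  (((hasDerivAt_pow 2 x).neg.div_const c).congr_deriv (by ring)).exp.congr_deriv (mul_comm _ _)

theorem hasDerivAt_aeval_hermite_mul_exp (n : ℕ) (x : ℝ) :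
    HasDerivAt (fun y : ℝ => aeval y (hermite n) * exp (-y ^ 2 / 2))
      (-(aeval x (hermite (n + 1)) * exp (-x ^ 2 / 2))) x := by
  refine (((hermite n).hasDerivAt_aeval x).mul (hasDerivAt_exp_neg_sq_div 2 x)).congr_deriv ?_
  rw [hermite_succ]
  simp only [map_sub, map_mul, aeval_X]
  ring

theorem integral_aeval_hermite_succ_sq_mul_exp (n : ℕ) :
    ∫ x : ℝ, aeval x (hermite (n + 1)) ^ 2 * exp (-x ^ 2 / 2)
      = (n + 1) * ∫ x : ℝ, aeval x (hermite n) ^ 2 * exp (-x ^ 2 / 2) := by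
  have hgauss (x : ℝ) : exp (-x ^ 2 / 2) = exp (-(1 / 2) * x ^ 2) := by ring_nf
  have hint (m : ℕ) : Integrable (fun x : ℝ => aeval x (hermite m) ^ 2 * exp (-x ^ 2 / 2)) := by
    have := integrable_aeval_mul_exp_neg_mul_sq (hermite m ^ 2) one_half_pos
    simp only [map_pow] at this
    simpa only [hgauss] using this
  -- `He_{n+1} · (He_n e^{-x²/2})` vanishes at infinity, so its derivative integrates to zero
  have hF : Tendsto
      (fun x : ℝ => aeval x (hermite (n + 1)) * (aeval x (hermite n) * exp (-x ^ 2 / 2)))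
      (cocompact ℝ) (𝓝 0) := by
    simpa only [map_mul, hgauss, mul_assoc]
      using tendsto_aeval_mul_exp_neg_mul_sq_cocompact (hermite (n + 1) * hermite n) one_half_pos
  have hderiv (x : ℝ) : HasDerivAt
      (fun y : ℝ => aeval y (hermite (n + 1)) * (aeval y (hermite n) * exp (-y ^ 2 / 2)))
      ((n + 1) * (aeval x (hermite n) ^ 2 * exp (-x ^ 2 / 2))
        - aeval x (hermite (n + 1)) ^ 2 * exp (-x ^ 2 / 2)) x := by
    refine (((hermite (n + 1)).hasDerivAt_aeval x).mul
      (hasDerivAt_aeval_hermite_mul_exp n x)).congr_deriv ?_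
    simp only [derivative_hermite_succ, map_mul, map_add, map_natCast, map_one]
    ring
  have hzero := integral_of_hasDerivAt_of_tendsto hderiv
    (((hint n).const_mul _).sub (hint (n + 1)))
    (hF.mono_left atBot_le_cocompact) (hF.mono_left atTop_le_cocompact)
  rw [integral_sub ((hint n).const_mul _) (hint (n + 1)), integral_const_mul] at hzero
  linarith

theorem integral_aeval_hermite_sq_mul_exp (n : ℕ) :
    ∫ x : ℝ, aeval x (hermite n) ^ 2 * exp (-x ^ 2 / 2) = √(2 * π) * n ! := by
  induction n with
  | zero =>
    simp only [hermite_zero, map_one, one_pow, one_mul, Nat.factorial_zero, Nat.cast_one, mul_one]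
    convert integral_gaussian (1 / 2) using 3 <;> ring_nf
  | succ n ih =>
    rw [integral_aeval_hermite_succ_sq_mul_exp, ih, Nat.factorial_succ]
    push_cast
    ring

section EnergyEstimate

variable {u v ω ω' : ℝ → ℝ} {p b A B : ℝ}

theorem antitoneOn_energy (hu : ∀ x, HasDerivAt u (v x) x)
    (hv : ∀ x, HasDerivAt v (-(ω x * u x)) x) (hω : ∀ x, HasDerivAt ω (ω' x) x)
    (hω' : ∀ x ∈ Icc p b, ω' x ≤ 0) :
    AntitoneOn (fun x => ω x * u x ^ 2 + v x ^ 2) (Icc p b) := by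
  have hE (x : ℝ) : HasDerivAt (fun x => ω x * u x ^ 2 + v x ^ 2) (ω' x * u x ^ 2) x :=
    (((hω x).mul ((hu x).pow 2)).add ((hv x).pow 2)).congr_deriv
      (by simp only [Pi.pow_apply]; ring)
  refine antitoneOn_of_deriv_nonpos (convex_Icc p b) (HasDerivAt.continuousOn fun x _ => hE x)
    (fun x _ => (hE x).differentiableAt.differentiableWithinAt) fun x hx => ?_
  rw [(hE x).deriv]
  exact mul_nonpos_of_nonpos_of_nonneg (hω' x (interior_subset hx)) (sq_nonneg _)

theorem monotoneOn_modifiedEnergy (hu : ∀ x, HasDerivAt u (v x) x)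
    (hv : ∀ x, HasDerivAt v (-(ω x * u x)) x) (hω : ∀ x, HasDerivAt ω (ω' x) x)
    (hω' : ∀ x ∈ Icc p b, ω' x ≤ 0) (hω0 : ∀ x ∈ Icc p b, 0 < ω x) :
    MonotoneOn (fun x => u x ^ 2 + v x ^ 2 / ω x) (Icc p b) := by
  have hQ (x : ℝ) (hx : x ∈ Icc p b) :
      HasDerivAt (fun x => u x ^ 2 + v x ^ 2 / ω x) (-ω' x * v x ^ 2 / ω x ^ 2) x :=
    (((hu x).pow 2).add (((hv x).pow 2).div (hω x) (hω0 x hx).ne')).congr_deriv (by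
      have := (hω0 x hx).ne'
      simp only [Pi.pow_apply]
      field_simp
      ring)
  refine monotoneOn_of_deriv_nonneg (convex_Icc p b) (HasDerivAt.continuousOn hQ)
    (fun x hx => (hQ x (interior_subset hx)).differentiableAt.differentiableWithinAt)
    fun x hx => ?_
  rw [(hQ x (interior_subset hx)).deriv]
  exact div_nonneg (mul_nonneg (neg_nonneg.2 (hω' x (interior_subset hx))) (sq_nonneg _))
    (sq_nonneg _)

theorem integral_sq_eq_add_integral (hu : ∀ x, HasDerivAt u (v x) x)
    (hv : ∀ x, HasDerivAt v (-(ω x * u x)) x) (hωc : Continuous ω) :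
    ∫ x in p..b, v x ^ 2 = u b * v b - u p * v p + ∫ x in p..b, ω x * u x ^ 2 := by
  have huc : Continuous u := continuous_iff_continuousAt.2 fun x => (hu x).continuousAt
  have hvc : Continuous v := continuous_iff_continuousAt.2 fun x => (hv x).continuousAt
  have hderiv (x : ℝ) : HasDerivAt (fun x => u x * v x) (v x ^ 2 - ω x * u x ^ 2) x :=
    ((hu x).mul (hv x)).congr_deriv (by ring)
  have hc₁ : Continuous fun x => v x ^ 2 - ω x * u x ^ 2 := by fun_prop
  have hc₂ : Continuous fun x => ω x * u x ^ 2 := by fun_prop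
  rw [← intervalIntegral.integral_eq_sub_of_hasDerivAt (fun x _ => hderiv x)
    (hc₁.intervalIntegrable _ _), ← intervalIntegral.integral_add (hc₁.intervalIntegrable _ _)
    (hc₂.intervalIntegrable _ _)]
  simp

theorem sq_mul_le_integral_sq (hu : ∀ x, HasDerivAt u (v x) x)
    (hv : ∀ x, HasDerivAt v (-(ω x * u x)) x) (hω : ∀ x, HasDerivAt ω (ω' x) x)
    (hω' : ∀ x ∈ Icc p b, ω' x ≤ 0) (hpb : p ≤ b) (hA : 0 < A)
    (hAω : ∀ x ∈ Icc p b, A ≤ ω x) (hωB : ∀ x ∈ Icc p b, ω x ≤ B)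
    (hlen : B / (A * √A) ≤ (b - p) / 2) :
    u p ^ 2 * ((b - p) / 2) ≤ (1 + B / A) * ∫ x in p..b, u x ^ 2 := by
  have huc : Continuous u := continuous_iff_continuousAt.2 fun x => (hu x).continuousAt
  have hvc : Continuous v := continuous_iff_continuousAt.2 fun x => (hv x).continuousAt
  have hωc : Continuous ω := continuous_iff_continuousAt.2 fun x => (hω x).continuousAt
  have hω0 (x : ℝ) (hx : x ∈ Icc p b) : 0 < ω x := hA.trans_le (hAω x hx)
  have hp : p ∈ Icc p b := left_mem_Icc.2 hpb
  have hsqrtA : 0 < √A := sqrt_pos.2 hA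
  set Q := u p ^ 2 + v p ^ 2 / ω p
  set J := ∫ x in p..b, u x ^ 2
  set V := ∫ x in p..b, v x ^ 2
  have hQ0 : 0 ≤ Q := add_nonneg (sq_nonneg _) (div_nonneg (sq_nonneg _) (hω0 p hp).le)
  have hQ : (b - p) * Q ≤ J + V / A := by
    have hmono := monotoneOn_modifiedEnergy hu hv hω hω' hω0
    calc (b - p) * Q = ∫ _ in p..b, Q := by simp
      _ ≤ ∫ x in p..b, (u x ^ 2 + v x ^ 2 / A) := by
        refine intervalIntegral.integral_mono_on hpb intervalIntegrable_const
          ((by fun_prop : Continuous fun x => u x ^ 2 + v x ^ 2 / A).intervalIntegrable p b)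
          fun x hx => (hmono hp hx hx.1).trans ?_
        dsimp only
        gcongr
        exact hAω x hx
      _ = J + V / A := by
        have hu2 : Continuous fun x => u x ^ 2 := by fun_prop
        have hv2 : Continuous fun x => v x ^ 2 / A := by fun_prop
        rw [intervalIntegral.integral_add (hu2.intervalIntegrable p b)
          (hv2.intervalIntegrable p b), intervalIntegral.integral_div]
  -- the energy `ω u² + v²` is nonincreasing, so it controls the boundary term `u v` by AM-GM
  have hboundary (x : ℝ) (hx : x ∈ Icc p b) : |u x * v x| * (2 * √A) ≤ ω p * Q := by
    have hE : ω x * u x ^ 2 + v x ^ 2 ≤ ω p * Q := by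
      have := antitoneOn_energy hu hv hω hω' hp hx hx.1
      have hQ : ω p * Q = ω p * u p ^ 2 + v p ^ 2 := by
        simp only [Q]; field_simp [(hω0 p hp).ne']
      linarith
    have hAM : |u x * v x| * (2 * √A) ≤ A * u x ^ 2 + v x ^ 2 := by
      rw [abs_mul]
      nlinarith [sq_nonneg (√A * |u x| - |v x|), sq_abs (u x), sq_abs (v x), sq_sqrt hA.le]
    nlinarith [hAω x hx, sq_nonneg (u x)]
  have hV : V ≤ B * Q / √A + B * J := by
    have hparts : V = u b * v b - u p * v p + ∫ x in p..b, ω x * u x ^ 2 :=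
      integral_sq_eq_add_integral hu hv hωc
    have hbd : u b * v b - u p * v p ≤ B * Q / √A := by
      rw [le_div_iff₀ hsqrtA]
      have := hboundary b (right_mem_Icc.2 hpb)
      have := hboundary p hp
      have := hωB p hp
      nlinarith [le_abs_self (u b * v b), neg_abs_le (u p * v p)]
    have hint : ∫ x in p..b, ω x * u x ^ 2 ≤ B * J := by
      rw [← intervalIntegral.integral_const_mul]
      exact intervalIntegral.integral_mono_on hpb ((hωc.mul (huc.pow 2)).intervalIntegrable p b)
        ((huc.pow 2).intervalIntegrable p b |>.const_mul B)
        fun x hx => mul_le_mul_of_nonneg_right (hωB x hx) (sq_nonneg _)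
    linarith
  have hB : 0 ≤ B := (hω0 p hp).le.trans (hωB p hp)
  calc u p ^ 2 * ((b - p) / 2) ≤ Q * ((b - p) / 2) := by
        gcongr
        exact le_add_of_nonneg_right (div_nonneg (sq_nonneg _) (hω0 p hp).le)
    _ = (b - p) * Q - (b - p) / 2 * Q := by ring
    _ ≤ J + (B * Q / √A + B * J) / A - B / (A * √A) * Q := by
        gcongr
        exact hQ.trans (by gcongr)
    _ = (1 + B / A) * J := by field_simp; ring

end EnergyEstimate

def hermiteFunDeriv (k : ℕ) (x : ℝ) : ℝ :=
  (aeval x (derivative (hermite k)) - x / 2 * aeval x (hermite k)) * exp (-x ^ 2 / 4) /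
    √(√(2 * π) * k !)

theorem hasDerivAt_hermiteFun (k : ℕ) (x : ℝ) :
    HasDerivAt (hermiteFun k) (hermiteFunDeriv k x) x :=
  ((((hermite k).hasDerivAt_aeval x).mul (hasDerivAt_exp_neg_sq_div 4 x)).div_const
    _).congr_deriv (by simp only [hermiteFunDeriv]; ring)

theorem hasDerivAt_hermiteFunDeriv (k : ℕ) (x : ℝ) :
    HasDerivAt (hermiteFunDeriv k) (-((k + 1 / 2 - x ^ 2 / 4) * hermiteFun k x)) x := by
  have h := (((((hermite k).derivative.hasDerivAt_aeval x).sub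
    ((hasDerivAt_id x).div_const 2 |>.mul ((hermite k).hasDerivAt_aeval x))).mul
      (hasDerivAt_exp_neg_sq_div 4 x)).div_const (√(√(2 * π) * k !)))
  refine h.congr_deriv ?_
  simp only [hermiteFun, derivative_derivative_hermite, map_sub, map_mul, aeval_X, map_natCast,
    Pi.sub_apply, Pi.mul_apply, id]
  ring

theorem hermiteFun_sq (k : ℕ) (x : ℝ) :
    hermiteFun k x ^ 2 = aeval x (hermite k) ^ 2 * exp (-x ^ 2 / 2) / (√(2 * π) * k !) := by
  rw [hermiteFun, div_pow, sq_sqrt (by positivity), mul_pow, ← exp_nat_mul]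
  ring_nf

theorem integral_hermiteFun_sq (k : ℕ) : ∫ x, hermiteFun k x ^ 2 = 1 := by
  simp_rw [hermiteFun_sq, integral_div, integral_aeval_hermite_sq_mul_exp]
  exact div_self (by positivity)

theorem integrable_hermiteFun_sq (k : ℕ) : Integrable fun x => hermiteFun k x ^ 2 := by
  simp_rw [hermiteFun_sq]
  refine Integrable.div_const ?_ _
  have := integrable_aeval_mul_exp_neg_mul_sq (hermite k ^ 2) one_half_pos
  simp only [map_pow] at this
  convert this using 4
  ring

theorem abs_hermiteFun_neg (k : ℕ) (x : ℝ) : |hermiteFun k (-x)| = |hermiteFun k x| := by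
  simp only [hermiteFun, aeval_neg_hermite, abs_div, abs_mul, abs_pow, abs_neg, abs_one, one_pow,
    one_mul, neg_sq]

theorem exists_abs_hermiteFun_le (k : ℕ) : ∃ C, ∀ x, |hermiteFun k x| ≤ C := by
  obtain ⟨C, hC⟩ :=
    exists_abs_aeval_mul_exp_neg_mul_sq_le (hermite k) (by norm_num : (0 : ℝ) < 1 / 4)
  refine ⟨C / √(√(2 * π) * k !), fun x => ?_⟩
  have hx := hC x
  rw [show -(1 / 4) * x ^ 2 = -x ^ 2 / 4 by ring] at hx
  rw [hermiteFun, abs_div, abs_of_nonneg (sqrt_nonneg _)]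
  gcongr

theorem hermiteFun_sq_mul_le (k : ℕ) {p L A : ℝ} (hp : 0 ≤ p) (hL : 0 ≤ L) (hA : 0 < A)
    (hAω : ∀ x ∈ Icc p (p + L), A ≤ k + 1 / 2 - x ^ 2 / 4)
    (hlen : (k + 1 / 2) / (A * √A) ≤ L / 2) :
    hermiteFun k p ^ 2 * (L / 2) ≤ 1 + (k + 1 / 2) / A := by
  have hω (x : ℝ) : HasDerivAt (fun x : ℝ => (k : ℝ) + 1 / 2 - x ^ 2 / 4) (-(x / 2)) x :=
    ((hasDerivAt_pow 2 x).div_const 4 |>.const_sub _).congr_deriv (by ring)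
  have h := sq_mul_le_integral_sq (b := p + L) (B := (k : ℝ) + 1 / 2) (hasDerivAt_hermiteFun k)
    (fun x => (hasDerivAt_hermiteFunDeriv k x).congr_deriv (by ring)) hω
    (fun x hx => by linarith [hx.1]) (by linarith) hA hAω
    (fun x _ => by nlinarith [sq_nonneg x]) (by simpa using hlen)
  have hJ : ∫ x in p..p + L, hermiteFun k x ^ 2 ≤ 1 := by
    rw [intervalIntegral.integral_of_le (by linarith), ← integral_hermiteFun_sq k]
    exact setIntegral_le_integral (integrable_hermiteFun_sq k)
      (Eventually.of_forall fun x => sq_nonneg _)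
  have hB : 0 ≤ 1 + (k + 1 / 2) / A := by positivity
  calc hermiteFun k p ^ 2 * (L / 2) = hermiteFun k p ^ 2 * ((p + L - p) / 2) := by ring_nf
    _ ≤ (1 + (k + 1 / 2) / A) * ∫ x in p..p + L, hermiteFun k x ^ 2 := h
    _ ≤ 1 + (k + 1 / 2) / A := mul_le_of_le_one_right hB hJ

theorem rpow_neg_one_div_four_sq {x : ℝ} (hx : 0 ≤ x) :
    (x ^ (-(1 / 4 : ℝ))) ^ 2 = (√x)⁻¹ := by
  rw [← rpow_natCast, ← rpow_mul hx, sqrt_eq_rpow, ← rpow_neg hx]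
  norm_num

theorem le_add_half_sub_sq_div_four_of_bulk {Υ : ℝ} (hΥ : Υ ∈ Ioo 0 1) {κ p x : ℝ}
    (hκ : 0 ≤ κ) (hp : 0 ≤ p) (hpκ : p ≤ (2 - Υ) * (1 + Υ / 10) * √κ)
    (hx : x ∈ Icc p (p + Υ * √κ / 8)) :
    Υ ^ 2 * κ / 4 ≤ κ + 1 / 2 - x ^ 2 / 4 := by
  obtain ⟨hΥ0, hΥ1⟩ := hΥ
  have hxκ : x ≤ ((2 - Υ) * (1 + Υ / 10) + Υ / 8) * √κ := by linarith [hx.2]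
  have hc : ((2 - Υ) * (1 + Υ / 10) + Υ / 8) ^ 2 ≤ 4 - Υ := by
    nlinarith [mul_pos hΥ0 hΥ0, mul_pos (mul_pos hΥ0 hΥ0) hΥ0, mul_pos hΥ0 (sub_pos.2 hΥ1)]
  have hx2 : x ^ 2 ≤ (4 - Υ) * κ := by
    calc x ^ 2 ≤ (((2 - Υ) * (1 + Υ / 10) + Υ / 8) * √κ) ^ 2 :=
          pow_le_pow_left₀ (hp.trans hx.1) hxκ 2
      _ ≤ (4 - Υ) * κ := by rw [mul_pow, sq_sqrt hκ]; gcongr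
  nlinarith [mul_nonneg (mul_nonneg hΥ0.le hκ) (sub_nonneg.2 hΥ1.le)]

theorem abs_hermiteFun_le_of_large {Υ : ℝ} (hΥ : Υ ∈ Ioo 0 1) {k : ℕ} (hk : 256 / Υ ^ 4 ≤ k)
    {p : ℝ} (hp : 0 ≤ p) (hpk : p ≤ (2 - Υ) * (1 + Υ / 10) * √k) :
    |hermiteFun k p| ≤ 11 / Υ ^ 2 * (k : ℝ) ^ (-(1 / 4 : ℝ)) := by
  have ⟨hΥ0, hΥ1⟩ := hΥ
  have hk4 : 256 ≤ Υ ^ 4 * k := by rwa [div_le_iff₀' (by positivity)] at hk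
  have hk1 : (1 : ℝ) ≤ k := by nlinarith [pow_le_one₀ hΥ0.le hΥ1.le (n := 4)]
  have hk0 : 0 < (k : ℝ) := by linarith
  set s := √(k : ℝ)
  have hs : 0 < s := sqrt_pos.2 hk0
  have hss : s ^ 2 = k := sq_sqrt hk0.le
  -- taking `A = Υ²k/4` rather than `Υk/4` keeps `√A = Υ√k/2` free of `√Υ`
  have hsqrt : √(Υ ^ 2 * k / 4) = Υ * s / 2 := by
    rw [show Υ ^ 2 * k / 4 = (Υ * s / 2) ^ 2 by rw [mul_div_assoc, div_pow, mul_pow, hss]; ring]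
    exact sqrt_sq (by positivity)
  have hlen : (k + 1 / 2) / (Υ ^ 2 * k / 4 * √(Υ ^ 2 * k / 4)) ≤ Υ * s / 8 / 2 := by
    rw [hsqrt, div_le_iff₀ (by positivity),
      show Υ * s / 8 / 2 * (Υ ^ 2 * k / 4 * (Υ * s / 2)) = Υ ^ 4 * k * s ^ 2 / 128 by ring, hss]
    nlinarith [mul_le_mul_of_nonneg_right hk4 hk0.le]
  have hB : 1 + (k + 1 / 2) / (Υ ^ 2 * k / 4) ≤ 7 / Υ ^ 2 := by
    have h6 : (k + 1 / 2) / (Υ ^ 2 * k / 4) ≤ 6 / Υ ^ 2 := by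
      rw [div_le_div_iff₀ (by positivity) (by positivity)]
      nlinarith [pow_pos hΥ0 2]
    have h1 : 1 ≤ 1 / Υ ^ 2 := by
      rw [le_div_iff₀ (by positivity)]
      nlinarith
    linarith [show 1 / Υ ^ 2 + 6 / Υ ^ 2 = 7 / Υ ^ 2 by ring]
  have h := (hermiteFun_sq_mul_le k hp (by positivity) (by positivity)
    (fun x hx => le_add_half_sub_sq_div_four_of_bulk hΥ hk0.le hp hpk hx) hlen).trans hB
  have hsq : hermiteFun k p ^ 2 ≤ (11 / Υ ^ 2 * (k : ℝ) ^ (-(1 / 4 : ℝ))) ^ 2 := by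
    rw [mul_pow, rpow_neg_one_div_four_sq hk0.le]
    calc hermiteFun k p ^ 2 = hermiteFun k p ^ 2 * (Υ * s / 8 / 2) * (16 / (Υ * s)) := by
          field_simp
          ring
      _ ≤ 7 / Υ ^ 2 * (16 / (Υ * s)) := by gcongr
      _ = 112 / Υ ^ 3 * s⁻¹ := by field_simp; ring
      _ ≤ (11 / Υ ^ 2) ^ 2 * s⁻¹ := by
        gcongr
        rw [div_pow, div_le_div_iff₀ (by positivity) (by positivity)]
        nlinarith [pow_pos hΥ0 3]
  exact abs_le_of_sq_le_sq hsq (by positivity)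

theorem exists_abs_hermiteFun_le_mul_rpow (K : ℕ) :
    ∃ C, 0 < C ∧ ∀ k, 0 < k → k ≤ K → ∀ x,
      |hermiteFun k x| ≤ C * (k : ℝ) ^ (-(1 / 4 : ℝ)) := by
  choose M hM using exists_abs_hermiteFun_le
  set S := ∑ j ∈ Finset.range (K + 1), |M j|
  have hS : 0 ≤ S := Finset.sum_nonneg fun j _ => abs_nonneg _
  refine ⟨(S + 1) * ((K : ℝ) + 1) ^ (1 / 4 : ℝ), by positivity, fun k hk hkK x => ?_⟩
  have hk0 : (0 : ℝ) < k := Nat.cast_pos.2 hk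
  have hscale : 1 ≤ ((K : ℝ) + 1) ^ (1 / 4 : ℝ) * (k : ℝ) ^ (-(1 / 4 : ℝ)) := by
    rw [rpow_neg hk0.le, ← div_eq_mul_inv, one_le_div (by positivity)]
    gcongr
    exact (Nat.cast_le.2 hkK).trans (le_add_of_nonneg_right zero_le_one)
  calc |hermiteFun k x| ≤ |M k| := (hM k x).trans (le_abs_self _)
    _ ≤ S := Finset.single_le_sum (f := fun j => |M j|) (fun j _ => abs_nonneg _)
        (Finset.mem_range.2 (Nat.lt_succ_of_le hkK))
    _ ≤ (S + 1) * (((K : ℝ) + 1) ^ (1 / 4 : ℝ) * (k : ℝ) ^ (-(1 / 4 : ℝ))) := by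
        nlinarith
    _ = _ := by ring

theorem abs_mul_sqrt_le {Υ : ℝ} (hΥ : Υ ∈ Ioo 0 1) {k N : ℕ} (hkN : (1 - Υ / 10) * N ≤ k)
    {x : ℝ} (hx : x ∈ Icc (-2 + Υ) (2 - Υ)) :
    |x * √N| ≤ (2 - Υ) * (1 + Υ / 10) * √k := by
  obtain ⟨hΥ0, hΥ1⟩ := hΥ
  have hN : (N : ℝ) ≤ (1 + Υ / 10) ^ 2 * k := by
    have hN0 : (0 : ℝ) ≤ N := N.cast_nonneg
    nlinarith [mul_nonneg hN0 hΥ0.le, mul_nonneg (mul_nonneg hN0 hΥ0.le) hΥ0.le]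
  have hsqrtN : √N ≤ (1 + Υ / 10) * √k := by
    rw [← sqrt_sq (by linarith : 0 ≤ 1 + Υ / 10), ← sqrt_mul (sq_nonneg _)]
    exact sqrt_le_sqrt hN
  rw [abs_mul, abs_of_nonneg (sqrt_nonneg _), mul_assoc]
  exact mul_le_mul (abs_le.2 ⟨by linarith [hx.1], hx.2⟩) hsqrtN (sqrt_nonneg _) (by linarith)

theorem abs_hermiteFun_abs (k : ℕ) (x : ℝ) : |hermiteFun k (|x|)| = |hermiteFun k x| := by
  rcases abs_choice x with h | h <;> rw [h]
  exact abs_hermiteFun_neg k x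

/-- Uniform decay of Hermite functions in the bulk. -/
theorem hermite_function_bulk_bound (Υ : ℝ) (hΥ : Υ ∈ Set.Ioo (0 : ℝ) 1) :
    ∃ C : ℝ, 0 < C ∧ ∀ k N : ℕ, 0 < k → 0 < N →
      (1 - Υ / 10) * (N : ℝ) ≤ (k : ℝ) →
      ∀ x ∈ Set.Icc (-2 + Υ) (2 - Υ),
        |hermiteFun k (x * Real.sqrt N)| ≤ C * (k : ℝ) ^ (-(1 / 4 : ℝ)) := by
  obtain ⟨C₀, hC₀, hsmall⟩ := exists_abs_hermiteFun_le_mul_rpow ⌈256 / Υ ^ 4⌉₊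
  have hΥ0 : 0 < Υ := hΥ.1
  refine ⟨C₀ + 11 / Υ ^ 2, by positivity, fun k N hk _ hkN x hx => ?_⟩
  rw [← abs_hermiteFun_abs]
  rcases le_or_gt (256 / Υ ^ 4) (k : ℝ) with hlarge | hkK
  · calc _ ≤ 11 / Υ ^ 2 * (k : ℝ) ^ (-(1 / 4 : ℝ)) :=
          abs_hermiteFun_le_of_large hΥ hlarge (abs_nonneg _) (abs_mul_sqrt_le hΥ hkN hx)
      _ ≤ _ := by gcongr; linarith
  · calc _ ≤ C₀ * (k : ℝ) ^ (-(1 / 4 : ℝ)) :=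
          hsmall k hk (by exact_mod_cast hkK.le.trans (Nat.le_ceil _)) _
      _ ≤ _ := by gcongr; linarith [show 0 < 11 / Υ ^ 2 by positivity]

end
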